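/- arXiv:1811.04596 — 3 statements merged into one kernel-verified Lean document; each statement's English description precedes it below -/
import Mathlib

section
/- The maximum frequency over all pairs equals the maximum frequency over all maximal repeats: if T contains some length-2 substring occurring at least twice, then max{ occ_T(p) : p a length-2 substring of T with occ_T(p) ≥ 2 } = max{ occ_T(r) : r a maximal repeat of T }. -/
/-!
Extending a string never increases its number of occurrences, so a non-maximal repeat has a
one-character extension with the same count; iterating (the length is bounded by `|T|`) turns
every repeat into a maximal repeat with the same count. Conversely every repeat occurs at most
as often as its first two characters. Hence a most frequent pair extends to a maximal repeat
attaining the maximum over all maximal repeats.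
-/

/-- Number of occurrences of `s` as a substring of `T` (positions where `s` is a prefix of a suffix of `T`). -/
def occ {α : Type*} [DecidableEq α] (T s : List α) : ℕ :=
  ((List.range (T.length + 1)).filter (fun i => decide (s <+: T.drop i))).length

/-- `r` is a maximal repeat of `T`. -/
def MaximalRepeat {α : Type*} [DecidableEq α] (T r : List α) : Prop :=
  2 ≤ r.length ∧ 2 ≤ occ T r ∧
    (∀ c : α, occ T (c :: r) < occ T r) ∧ (∀ c : α, occ T (r ++ [c]) < occ T r)

section Occ

variable {α : Type*} [DecidableEq α] {T s t : List α}

lemma occ_eq_card_filter (T s : List α) :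
    occ T s = ((Finset.range (T.length + 1)).filter (fun i => s <+: T.drop i)).card :=
  rfl

/-- An occurrence of `a ++ s ++ b` at position `i` is an occurrence of `s` at `i + |a|`. -/
lemma occ_le_occ_of_isInfix (h : s <:+: t) : occ T t ≤ occ T s := by
  obtain ⟨a, b, rfl⟩ := h
  rw [occ_eq_card_filter, occ_eq_card_filter]
  refine Finset.card_le_card_of_injOn (· + a.length) ?_ (fun i _ j _ hij => by simpa using hij)
  intro i hi
  simp only [Finset.coe_filter, Finset.mem_range, Set.mem_ofPred_eq] at hi ⊢
  obtain ⟨hiT, u, hu⟩ := hi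
  have hlen := congrArg List.length hu
  simp only [List.length_append, List.length_drop] at hlen
  refine ⟨by omega, b ++ u, ?_⟩
  rw [← List.drop_drop, ← hu]
  simp

lemma occ_le_length_succ (T s : List α) : occ T s ≤ T.length + 1 :=
  (List.length_filter_le _ _).trans_eq List.length_range

lemma length_le_of_occ_pos (h : 0 < occ T s) : s.length ≤ T.length := by
  rw [occ_eq_card_filter] at h
  obtain ⟨i, hi⟩ := Finset.card_pos.mp h
  exact (List.IsPrefix.length_le (Finset.mem_filter.mp hi).2).trans (by simp)

lemma occ_le_occ_take (s : List α) (n : ℕ) : occ T s ≤ occ T (s.take n) :=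
  occ_le_occ_of_isInfix (List.take_prefix n s).isInfix

lemma exists_extension_occ_eq_of_not_maximalRepeat (hs : 2 ≤ s.length) (hocc : 2 ≤ occ T s)
    (hmax : ¬ MaximalRepeat T s) :
    ∃ t, s <:+: t ∧ s.length < t.length ∧ occ T t = occ T s := by
  simp only [MaximalRepeat, hs, hocc, true_and, not_and_or, not_forall, not_lt] at hmax
  rcases hmax with ⟨c, hc⟩ | ⟨c, hc⟩
  · exact ⟨c :: s, List.infix_cons (List.infix_refl s), by simp,
      le_antisymm (occ_le_occ_of_isInfix (List.infix_cons (List.infix_refl s))) hc⟩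
  · have hinf : s <:+: s ++ [c] := (List.prefix_append s [c]).isInfix
    exact ⟨s ++ [c], hinf, by simp, le_antisymm (occ_le_occ_of_isInfix hinf) hc⟩

lemma exists_maximalRepeat_occ_eq {s : List α} (hs : 2 ≤ s.length) (hocc : 2 ≤ occ T s) :
    ∃ r, MaximalRepeat T r ∧ occ T r = occ T s := by
  by_cases hmax : MaximalRepeat T s
  · exact ⟨s, hmax, rfl⟩
  obtain ⟨t, -, hlen, ht⟩ := exists_extension_occ_eq_of_not_maximalRepeat hs hocc hmax
  have : T.length - t.length < T.length - s.length := by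
    have := length_le_of_occ_pos (T := T) (s := t) (by omega)
    omega
  obtain ⟨r, hr, hrt⟩ := exists_maximalRepeat_occ_eq (s := t) (by omega) (by omega)
  exact ⟨r, hr, hrt.trans ht⟩
termination_by T.length - s.length

end Occ

theorem max_pair_freq_eq_max_maximal_repeat_freq {α : Type*} [DecidableEq α] (T : List α)
    (h : ∃ p : List α, p.length = 2 ∧ 2 ≤ occ T p) :
    ∃ M : ℕ,
      (∀ p : List α, p.length = 2 → 2 ≤ occ T p → occ T p ≤ M) ∧
      (∃ p : List α, p.length = 2 ∧ 2 ≤ occ T p ∧ occ T p = M) ∧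
      (∀ r : List α, MaximalRepeat T r → occ T r ≤ M) ∧
      (∃ r : List α, MaximalRepeat T r ∧ occ T r = M) := by
  set pairFreqs : Set ℕ := {n | ∃ p : List α, p.length = 2 ∧ 2 ≤ occ T p ∧ occ T p = n}
  have hbdd : BddAbove pairFreqs := by
    refine ⟨T.length + 1, ?_⟩
    rintro n ⟨p, -, -, rfl⟩
    exact occ_le_length_succ T p
  obtain ⟨p, hp2, hpocc⟩ := h
  obtain ⟨M, ⟨q, hq2, hqocc, rfl⟩, hmax⟩ :=
    hbdd.exists_isGreatest_of_nonempty ⟨occ T p, p, hp2, hpocc, rfl⟩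
  have hpair_le : ∀ p : List α, p.length = 2 → 2 ≤ occ T p → occ T p ≤ occ T q :=
    fun p hp2 hpocc => hmax ⟨p, hp2, hpocc, rfl⟩
  have hrepeat_le : ∀ s : List α, 2 ≤ s.length → 2 ≤ occ T s → occ T s ≤ occ T q := by
    intro s hs hsocc
    have hs_take := occ_le_occ_take (T := T) s 2
    exact hs_take.trans (hpair_le _ (by rw [List.length_take]; omega) (hsocc.trans hs_take))
  obtain ⟨r, hr, hrq⟩ := exists_maximalRepeat_occ_eq (by omega) hqocc
  exact ⟨occ T q, hpair_le, ⟨q, hq2, hqocc, rfl⟩, fun r hr => hrepeat_le r hr.1 hr.2.1, r, hr, hrq⟩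
end

section
/- Let s occur in T at its leftmost occurrence position p, and suppose another occurrence of s starts at position q with p < q < p + |s| - 1 (overlap length ℓ := |s| - (q - p) ≥ 2). Then the prefix u of s of length ℓ satisfies occ_T(u) ≥ occ_T(s) + 1. -/
theorem overlap_prefix_more_frequent {α : Type*} [DecidableEq α] (T s : List α) (p q : ℕ)
    (hp : s <+: T.drop p) (hmin : ∀ p' : ℕ, p' < p → ¬ s <+: T.drop p')
    (hq : s <+: T.drop q) (h1 : p < q) (h2 : q < p + s.length - 1) :
    occ T s + 1 ≤ occ T (s.take (s.length - (q - p))) := by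
  set d := q - p with hd
  set ℓ := s.length - d with hℓ
  have hslen : 1 ≤ s.length := by
    by_contra h
    push_neg at h
    interval_cases hs : s.length <;> omega
  have hd1 : 1 ≤ d := by omega
  have hdlt : d < s.length := by omega
  -- key: s.take ℓ = s.drop d
  obtain ⟨t, ht⟩ := id hp
  obtain ⟨t', ht'⟩ := id hq
  have hqdrop : T.drop q = s.drop d ++ t := by
    have : T.drop q = (T.drop p).drop d := by
      rw [List.drop_drop]
      congr 1
      omega
    rw [this, ← ht, List.drop_append_of_le_length (by omega)]
  have hkey : s.take ℓ = s.drop d := by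
    have h1' : (T.drop q).take ℓ = s.take ℓ := by
      rw [← ht', List.take_append_of_le_length (by omega)]
    have h2' : (T.drop q).take ℓ = s.drop d := by
      rw [hqdrop, List.take_append_of_le_length (by simp [hℓ]),
        List.take_of_length_le (by simp [hℓ])]
    rw [← h1', h2']
  -- Finset formulation
  have hocc : ∀ w : List α,
      occ T w = ((Finset.range (T.length + 1)).filter (fun i => w <+: T.drop i)).card :=
    fun w => rfl
  rw [hocc, hocc]
  set A := (Finset.range (T.length + 1)).filter (fun i => s <+: T.drop i) with hA
  set B := (Finset.range (T.length + 1)).filter (fun i => s.take ℓ <+: T.drop i) with hB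
  have hpT : p < T.length := by
    have := hp.length_le
    simp only [List.length_drop] at this
    omega
  have hpA : p ∈ A := by
    simp [hA, Finset.mem_filter]
    exact ⟨by omega, ⟨t, ht⟩⟩
  have hAne : A.Nonempty := ⟨p, hpA⟩
  set m := A.max' hAne with hm
  have hmA : m ∈ A := A.max'_mem hAne
  have hmem : ∀ i ∈ A, i ≤ m := fun i hi => A.le_max' i hi
  obtain ⟨hmrange, hms⟩ := Finset.mem_filter.mp hmA
  have hmT : m ≤ T.length := by simp at hmrange; omega
  obtain ⟨tm, htm⟩ := id hms
  have hmlen : s.length ≤ T.length - m := by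
    have := hms.length_le
    simp only [List.length_drop] at this
    omega
  -- x = m + d is in B but not in A
  have hxB : m + d ∈ B := by
    simp only [hB, Finset.mem_filter, Finset.mem_range]
    constructor
    · omega
    · rw [hkey]
      have : T.drop (m + d) = s.drop d ++ tm := by
        have h3 : (T.drop m).drop d = T.drop (m + d) := by
          rw [List.drop_drop, Nat.add_comm]
        rw [← h3, ← htm, List.drop_append_of_le_length (by omega)]
      exact ⟨tm, this.symm⟩
  have hxA : m + d ∉ A := fun h => by have := hmem _ h; omega
  have hsub : A ⊆ B := by
    intro i hi
    simp only [hA, Finset.mem_filter] at hi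
    simp only [hB, Finset.mem_filter]
    exact ⟨hi.1, (List.take_prefix ℓ s).trans hi.2⟩
  have : A ⊂ B := ⟨hsub, fun h => hxA (h hxB)⟩
  have := Finset.card_lt_card this
  omega
end

section
/- Let r be a repeat of T (|r| ≥ 2, occ_T(r) ≥ 2) whose frequency is maximum among all substrings of T of length at least 2 that occur at least twice. Then any two distinct occurrences of r in T overlap in at most one position; that is, if r occurs at positions i < j then j - i ≥ |r| - 1. -/
theorem occ_eq_card {α : Type*} [DecidableEq α] (T s : List α) :
    occ T s = ((Finset.range (T.length+1)).filter (fun i => s <+: T.drop i)).card := rfl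

theorem most_frequent_repeat_overlap_at_most_one {α : Type*} [DecidableEq α] (T r : List α)
    (h1 : 2 ≤ r.length) (h2 : 2 ≤ occ T r)
    (hmax : ∀ s : List α, 2 ≤ s.length → 2 ≤ occ T s → occ T s ≤ occ T r) :
    ∀ i j : ℕ, r <+: T.drop i → r <+: T.drop j → i < j → r.length - 1 ≤ j - i := by
  intro i j hi hj hij
  by_contra hlt
  push_neg at hlt
  set d := j - i with hd
  have hd1 : 1 ≤ d := by omega
  have hd2 : d + 2 ≤ r.length := by omega
  have hj' : j = i + d := by omega
  set q := r.take 2 with hq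
  have hql : q.length = 2 := by
    simp only [hq, List.length_take]; omega
  -- q is a prefix of r.drop d
  obtain ⟨u, hu⟩ := hi
  have hTj : T.drop j = r.drop d ++ u := by
    rw [hj', ← List.drop_drop, ← hu, List.drop_append_of_le_length (by omega)]
  have hqd : q <+: r.drop d := by
    have h1' : q <+: r.drop d ++ u := (List.take_prefix 2 r).trans (hTj ▸ hj)
    have h2' : q = (r.drop d ++ u).take 2 := by
      rw [List.prefix_iff_eq_take] at h1'
      rw [← hql]; exact h1'
    rw [h2', List.take_append_of_le_length (by rw [List.length_drop]; omega)]
    exact List.take_prefix 2 _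
  have key : ∀ p, r <+: T.drop p → q <+: T.drop (p + d) := by
    intro p hp
    obtain ⟨v, hv⟩ := hp
    have hTp : T.drop (p + d) = r.drop d ++ v := by
      rw [← List.drop_drop, ← hv, List.drop_append_of_le_length (by omega)]
    rw [hTp]
    exact hqd.trans (List.prefix_append _ _)
  -- Finset of occurrence positions
  set A := (Finset.range (T.length+1)).filter (fun p => r <+: T.drop p) with hA
  set B := (Finset.range (T.length+1)).filter (fun p => q <+: T.drop p) with hB
  have hAB : A ⊆ B := by
    intro p hp
    simp only [hA, hB, Finset.mem_filter] at *
    exact ⟨hp.1, (List.take_prefix 2 r).trans hp.2⟩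
  have hAne : A.Nonempty := by
    rw [← Finset.card_pos, ← occ_eq_card]; omega
  set M := A.max' hAne with hM
  have hMA : M ∈ A := A.max'_mem hAne
  have hMr : r <+: T.drop M := (Finset.mem_filter.mp hMA).2
  have hMdq : q <+: T.drop (M + d) := key M hMr
  have hMdlt : M + d < T.length + 1 := by
    have hne : T.drop (M + d) ≠ [] := by
      intro hnil
      have hq0 : q = [] := List.prefix_nil.mp (hnil ▸ hMdq)
      rw [hq0] at hql
      simp at hql
    rw [ne_eq, List.drop_eq_nil_iff] at hne
    omega
  have hMdB : M + d ∈ B := by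
    simp only [hB, Finset.mem_filter, Finset.mem_range]
    exact ⟨hMdlt, hMdq⟩
  have hMdA : M + d ∉ A := by
    intro hmem
    have := A.le_max' _ hmem
    omega
  have hss : A ⊂ B := ⟨hAB, fun hBA => hMdA (hBA hMdB)⟩
  have hcard : occ T r < occ T q := by
    rw [occ_eq_card, occ_eq_card]
    exact Finset.card_lt_card hss
  have := hmax q (by rw [hql]) (by omega)
  omega
end
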